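/- Let N be an even positive integer, c₂ real, and c₁ real with c := 2N c₁ an integer. Let k, l, k̃, l̃ be integers, set m̃ = k̃ − c l̃, and let P^{[k̃,l̃]} be the N×N diagonal matrix with entries P[m̄,m̄] = conj(ℰ(m̄, m̃, l̃)) for m̄ = 0,…,N−1, where ℰ(m̄, m̃, l̃) = e^{(2πi/N)(m̄ l̃ + N c₂ (((m̄ + m̃) mod N)² − m̄²))}. Then the DAFT-domain subchannel matrix satisfies H(k,l) · Π_N^{m̃ mod N} · P^{[k̃,l̃]} = e^{−(2πi/N)(N c₁ (2 l l̃ + l̃²) + m̃ l)} · H(k + k̃, l + l̃). That is, the MD-CDDS precoding matrix C = Π_N^{m̃ mod N} P^{[k̃,l̃]} of AFDM converts the subchannel of a path with Doppler k and delay l into a unit-modulus scalar multiple of the subchannel of the effective path with Doppler k + k̃ and delay l + l̃. -/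

import Mathlib

open Matrix Complex

/-- The `N × N` forward cyclic-shift matrix raised to the (integer) power `l`. -/
noncomputable def cyclicShift (N : ℕ) (l : ℤ) : Matrix (Fin N) (Fin N) ℂ :=
  Matrix.of fun p q => if ((p : ℕ) : ZMod N) = ((q : ℕ) : ZMod N) + (l : ZMod N) then 1 else 0

/-- The digital frequency-shift matrix `Δ_N^k = diag(e^{2πi k n / N}, n = 0,…,N−1)`. -/
noncomputable def dopplerShift (N : ℕ) (k : ℤ) : Matrix (Fin N) (Fin N) ℂ :=
  Matrix.diagonal fun n : Fin N =>
    Complex.exp (2 * Real.pi * Complex.I * (k : ℂ) * ((n : ℕ) : ℂ) / (N : ℂ))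

/-- The `N × N` unitary DFT matrix with entries `F[m,n] = e^{−2πi m n / N} / √N`. -/
noncomputable def dftMatrix (N : ℕ) : Matrix (Fin N) (Fin N) ℂ :=
  Matrix.of fun m n : Fin N =>
    Complex.exp (-(2 * Real.pi * Complex.I * ((m : ℕ) : ℂ) * ((n : ℕ) : ℂ) / (N : ℂ))) /
      (Real.sqrt N : ℂ)

/-- For a real parameter `c`, the diagonal chirp matrix `Λ_c = diag(e^{−2πi c q²})`. -/
noncomputable def chirpMatrix (N : ℕ) (c : ℝ) : Matrix (Fin N) (Fin N) ℂ :=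
  Matrix.diagonal fun q : Fin N =>
    Complex.exp (-(2 * Real.pi * Complex.I * (c : ℂ) * ((q : ℕ) : ℂ) ^ 2))

/-- The DAFT matrix `A = Λ_{c₂} F Λ_{c₁}`. -/
noncomputable def daft (N : ℕ) (c₁ c₂ : ℝ) : Matrix (Fin N) (Fin N) ℂ :=
  chirpMatrix N c₂ * dftMatrix N * chirpMatrix N c₁

/-- The DAFT-domain subchannel matrix `H(k,l) = A Δ_N^k Π_N^l Aᴴ`. -/
noncomputable def subChannel (N : ℕ) (c₁ c₂ : ℝ) (k l : ℤ) : Matrix (Fin N) (Fin N) ℂ :=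
  daft N c₁ c₂ * dopplerShift N k * cyclicShift N l * (daft N c₁ c₂)ᴴ

/-- The phase factor `ℰ(m̄, m̃, l̃) = e^{(2πi/N)(m̄ l̃ + N c₂ (((m̄ + m̃) mod N)² − m̄²))}`. -/
noncomputable def calE (N : ℕ) (c₂ : ℝ) (lt mt : ℤ) (mbar : ℤ) : ℂ :=
  Complex.exp ((2 * Real.pi * Complex.I / (N : ℂ)) *
    ((mbar : ℂ) * (lt : ℂ) +
      (N : ℂ) * (c₂ : ℂ) * ((((mbar + mt) % (N : ℤ) : ℤ) : ℂ) ^ 2 - (mbar : ℂ) ^ 2)))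

/-- The diagonal phase-compensation matrix `P^{[k̃,l̃]}` with entries
`P[m̄,m̄] = conj(ℰ(m̄, m̃, l̃))`. -/
noncomputable def phaseComp (N : ℕ) (c₂ : ℝ) (lt mt : ℤ) : Matrix (Fin N) (Fin N) ℂ :=
  Matrix.diagonal fun mbar : Fin N => (starRingEnd ℂ) (calE N c₂ lt mt ((mbar : ℕ) : ℤ))

/-!
The matrices `Δ^k Π^l` form a Heisenberg group, with `Π^b Δ^a = e^{-2πi ab/N} Δ^a Π^b`, which
the DFT and the chirps normalise. Conjugation by `Λ_{c₁}` sends `Δ^k Π^l` to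
`e^{2πi c₁ l²} Δ^{k - c l} Π^l`, so `H(k,l)` is that scalar times
`Λ_{c₂} F Δ^{k - c l} Π^l Fᴴ Λ_{c₂}ᴴ`. The phase `ℰ` is chosen so that the precoder passes
through `Λ_{c₂}ᴴ` as `Π^{m̃} Δ^{-l̃}`, which `Fᴴ` turns into `Δ^{m̃} Π^{l̃}`. Absorbing this into
`Δ^{k - c l} Π^l` gives `Δ^{k + k̃ - c (l + l̃)} Π^{l + l̃}`, the core of `H(k + k̃, l + l̃)`, and
the scalars combine to the stated phase.
-/

open scoped Real

variable {N : ℕ} [NeZero N]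

def finShift (l : ℤ) (q : Fin N) : Fin N :=
  ⟨(((q : ℕ) : ZMod N) + (l : ZMod N)).val, ZMod.val_lt _⟩

lemma natCast_finShift (l : ℤ) (q : Fin N) :
    ((finShift l q : ℕ) : ZMod N) = (q : ℕ) + (l : ZMod N) :=
  ZMod.natCast_zmod_val _

lemma natCast_eq_add_iff_eq_finShift (l : ℤ) (p q : Fin N) :
    ((p : ℕ) : ZMod N) = (q : ℕ) + (l : ZMod N) ↔ p = finShift l q := by
  constructor
  · intro h
    ext
    simp [finShift, ← h, ZMod.val_cast_of_lt p.isLt]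
  · rintro rfl
    exact natCast_finShift l q

lemma eq_finShift_iff (l : ℤ) (p q : Fin N) :
    p = finShift l q ↔ q = finShift (-l) p := by
  rw [← natCast_eq_add_iff_eq_finShift, ← natCast_eq_add_iff_eq_finShift, Int.cast_neg,
    ← sub_eq_add_neg, eq_sub_iff_add_eq, eq_comm]

lemma finShift_finShift (a b : ℤ) (q : Fin N) :
    finShift a (finShift b q) = finShift (a + b) q := by
  rw [← natCast_eq_add_iff_eq_finShift, natCast_finShift, natCast_finShift, Int.cast_add]
  ring

lemma intCast_finShift (l : ℤ) (q : Fin N) :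
    ((finShift l q : ℕ) : ℤ) = ((q : ℕ) + l) % N := by
  rw [finShift, ← ZMod.val_intCast]
  push_cast
  rfl

lemma cyclicShift_apply (l : ℤ) (p q : Fin N) :
    cyclicShift N l p q = if p = finShift l q then 1 else 0 := by
  simp only [cyclicShift, of_apply, natCast_eq_add_iff_eq_finShift]

lemma mul_cyclicShift_apply (M : Matrix (Fin N) (Fin N) ℂ) (l : ℤ) (m n : Fin N) :
    (M * cyclicShift N l) m n = M m (finShift l n) := by
  simp [mul_apply, cyclicShift_apply]

lemma cyclicShift_mul_apply (M : Matrix (Fin N) (Fin N) ℂ) (l : ℤ) (m n : Fin N) :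
    (cyclicShift N l * M) m n = M (finShift (-l) m) n := by
  simp [mul_apply, cyclicShift_apply, eq_finShift_iff l m]

lemma cyclicShift_mul_cyclicShift (a b : ℤ) :
    cyclicShift N a * cyclicShift N b = cyclicShift N (a + b) := by
  ext m n
  simp only [mul_cyclicShift_apply, cyclicShift_apply, finShift_finShift]

-- Through `ZMod.stdAddChar`, the `N`-periodicity of the phases becomes ring arithmetic in `ZMod N`.
lemma dopplerShift_eq_diagonal_stdAddChar (k : ℤ) :
    dopplerShift N k =
      diagonal fun n : Fin N => ZMod.stdAddChar ((k : ZMod N) * ((n : ℕ) : ZMod N)) := by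
  refine congrArg diagonal (funext fun n => ?_)
  rw [← Int.cast_natCast (R := ZMod N), ← Int.cast_mul, ZMod.stdAddChar_coe]
  push_cast
  rw [mul_assoc _ (k : ℂ)]

lemma conjTranspose_dftMatrix_apply (m n : Fin N) :
    (dftMatrix N)ᴴ m n =
      ZMod.stdAddChar (((m : ℕ) : ZMod N) * ((n : ℕ) : ZMod N)) / (√N : ℂ) := by
  rw [← Nat.cast_mul, ← Int.cast_natCast (R := ZMod N), ZMod.stdAddChar_coe]
  simp only [dftMatrix, conjTranspose_apply, of_apply, Complex.star_def, map_div₀,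
    ← Complex.exp_conj, map_neg, map_mul, Complex.conj_I, Complex.conj_ofReal, map_natCast,
    map_ofNat]
  push_cast
  ring_nf

lemma dopplerShift_mul_dopplerShift (a b : ℤ) :
    dopplerShift N a * dopplerShift N b = dopplerShift N (a + b) := by
  simp only [dopplerShift_eq_diagonal_stdAddChar, diagonal_mul_diagonal, Int.cast_add, add_mul,
    AddChar.map_add_eq_mul]

lemma conjTranspose_dftMatrix_mul_cyclicShift (s : ℤ) :
    (dftMatrix N)ᴴ * cyclicShift N s = dopplerShift N s * (dftMatrix N)ᴴ := by
  ext m n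
  rw [mul_cyclicShift_apply, dopplerShift_eq_diagonal_stdAddChar, diagonal_mul,
    conjTranspose_dftMatrix_apply, conjTranspose_dftMatrix_apply, natCast_finShift, mul_add,
    AddChar.map_add_eq_mul, mul_comm (s : ZMod N)]
  ring

lemma conjTranspose_dftMatrix_mul_dopplerShift (s : ℤ) :
    (dftMatrix N)ᴴ * dopplerShift N s = cyclicShift N (-s) * (dftMatrix N)ᴴ := by
  ext m n
  rw [cyclicShift_mul_apply, neg_neg, dopplerShift_eq_diagonal_stdAddChar, mul_diagonal,
    conjTranspose_dftMatrix_apply, conjTranspose_dftMatrix_apply, natCast_finShift, add_mul,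
    AddChar.map_add_eq_mul, mul_comm (s : ZMod N)]
  ring

lemma cyclicShift_mul_dopplerShift (a b : ℤ) :
    cyclicShift N b * dopplerShift N a =
      cexp (-(2 * π * I * a * b / N)) • (dopplerShift N a * cyclicShift N b) := by
  have hphase :
      cexp (-(2 * π * I * a * b / N)) = ZMod.stdAddChar (-((a : ZMod N) * (b : ZMod N))) := by
    rw [← Int.cast_mul, ← Int.cast_neg, ZMod.stdAddChar_coe]
    push_cast
    ring_nf
  ext m n
  rw [Matrix.smul_apply, dopplerShift_eq_diagonal_stdAddChar, mul_diagonal, diagonal_mul,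
    cyclicShift_apply, hphase, smul_eq_mul]
  split_ifs with h
  · rw [h, natCast_finShift, mul_one, one_mul, ← AddChar.map_add_eq_mul]
    congr 1
    ring
  · simp

lemma chirpMatrix_conj_dopplerShift_mul_cyclicShift (hEven : Even N) {c₁ : ℝ} {c : ℤ}
    (hc : 2 * (N : ℝ) * c₁ = c) (k l : ℤ) :
    chirpMatrix N c₁ * (dopplerShift N k * cyclicShift N l) * (chirpMatrix N c₁)ᴴ =
      cexp (2 * π * I * c₁ * l ^ 2) • (dopplerShift N (k - c * l) * cyclicShift N l) := by
  obtain ⟨t, hNt⟩ := hEven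
  ext m n
  simp only [chirpMatrix, dopplerShift, diagonal_conjTranspose, diagonal_mul, mul_diagonal,
    Matrix.smul_apply, smul_eq_mul, Pi.star_apply, cyclicShift_apply]
  split_ifs with h
  · obtain ⟨q, hm⟩ : ∃ q : ℤ, ((m : ℕ) : ℂ) = (n : ℕ) + l - N * q := by
      refine ⟨((n : ℕ) + l) / N, ?_⟩
      rw [h]
      exact_mod_cast (intCast_finShift l n).trans (Int.emod_def _ _)
    have hcC : 2 * (N : ℂ) * c₁ = c := by exact_mod_cast hc
    have hNtC : (N : ℂ) = t + t := by exact_mod_cast hNt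
    have ht : (t : ℂ) ≠ 0 := by
      norm_cast
      exact fun ht0 => NeZero.ne N (by omega)
    simp only [Complex.star_def, ← Complex.exp_conj, map_neg, map_mul, map_pow, Complex.conj_I,
      Complex.conj_ofReal, map_natCast, map_ofNat, mul_one, ← Complex.exp_add,
      Complex.exp_eq_exp_iff_exists_int]
    -- `m - l = n - N q`, and the leftover `c₁ N² q² = c t q²` is an integer since `N = 2 t`.
    refine ⟨c * q * (n : ℕ) - c * t * q ^ 2, ?_⟩
    push_cast
    rw [hm, ← hcC, hNtC]
    field_simp
    ring
  · simp

lemma conjTranspose_chirpMatrix_mul_cyclicShift_mul_phaseComp (c₂ : ℝ) (lt mt : ℤ) :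
    (chirpMatrix N c₂)ᴴ * cyclicShift N mt * phaseComp N c₂ lt mt =
      cyclicShift N mt * dopplerShift N (-lt) * (chirpMatrix N c₂)ᴴ := by
  ext p n
  simp only [chirpMatrix, phaseComp, dopplerShift, diagonal_conjTranspose, diagonal_mul,
    mul_diagonal, Pi.star_apply, cyclicShift_apply]
  split_ifs with h
  · have hp : ((p : ℕ) : ℂ) = ((((n : ℕ) + mt) % N : ℤ) : ℂ) := by
      rw [h]
      exact_mod_cast intCast_finShift mt n
    have hN : (N : ℂ) ≠ 0 := Nat.cast_ne_zero.mpr (NeZero.ne N)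
    simp only [calE, Complex.star_def, ← Complex.exp_conj, map_neg, map_mul, map_add, map_sub,
      map_div₀, map_pow, Complex.conj_I, Complex.conj_ofReal, map_natCast, map_intCast, map_ofNat,
      one_mul, mul_one, ← Complex.exp_add, hp]
    congr 1
    push_cast
    field_simp
    ring
  · simp

lemma subChannel_eq_smul (hEven : Even N) {c₁ : ℝ} {c : ℤ} (hc : 2 * (N : ℝ) * c₁ = c)
    (c₂ : ℝ) (k l : ℤ) :
    subChannel N c₁ c₂ k l = cexp (2 * π * I * c₁ * l ^ 2) •
      (chirpMatrix N c₂ * dftMatrix N * (dopplerShift N (k - c * l) * cyclicShift N l) *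
        (dftMatrix N)ᴴ * (chirpMatrix N c₂)ᴴ) := by
  calc subChannel N c₁ c₂ k l
      = chirpMatrix N c₂ * dftMatrix N *
          (chirpMatrix N c₁ * (dopplerShift N k * cyclicShift N l) * (chirpMatrix N c₁)ᴴ) *
          (dftMatrix N)ᴴ * (chirpMatrix N c₂)ᴴ := by
        simp only [subChannel, daft, conjTranspose_mul, Matrix.mul_assoc]
    _ = _ := by
        rw [chirpMatrix_conj_dopplerShift_mul_cyclicShift hEven hc]
        simp only [Matrix.mul_smul, Matrix.smul_mul]

lemma dopplerShift_mul_cyclicShift_mul_precoder_eq_smul (M : Matrix (Fin N) (Fin N) ℂ) (c₂ : ℝ)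
    (a l lt mt : ℤ) :
    M * (dopplerShift N a * cyclicShift N l) * (dftMatrix N)ᴴ * (chirpMatrix N c₂)ᴴ *
        cyclicShift N mt * phaseComp N c₂ lt mt =
      cexp (-(2 * π * I * mt * l / N)) •
        (M * (dopplerShift N (a + mt) * cyclicShift N (l + lt)) * (dftMatrix N)ᴴ *
          (chirpMatrix N c₂)ᴴ) := by
  calc M * (dopplerShift N a * cyclicShift N l) * (dftMatrix N)ᴴ * (chirpMatrix N c₂)ᴴ *
        cyclicShift N mt * phaseComp N c₂ lt mt
      = M * dopplerShift N a * cyclicShift N l * (dftMatrix N)ᴴ *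
          ((chirpMatrix N c₂)ᴴ * cyclicShift N mt * phaseComp N c₂ lt mt) := by
        simp only [Matrix.mul_assoc]
    _ = M * dopplerShift N a * cyclicShift N l * ((dftMatrix N)ᴴ * cyclicShift N mt) *
          dopplerShift N (-lt) * (chirpMatrix N c₂)ᴴ := by
        rw [conjTranspose_chirpMatrix_mul_cyclicShift_mul_phaseComp]
        simp only [Matrix.mul_assoc]
    _ = M * dopplerShift N a * (cyclicShift N l * dopplerShift N mt) *
          ((dftMatrix N)ᴴ * dopplerShift N (-lt)) * (chirpMatrix N c₂)ᴴ := by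
        rw [conjTranspose_dftMatrix_mul_cyclicShift]
        simp only [Matrix.mul_assoc]
    _ = cexp (-(2 * π * I * mt * l / N)) •
          (M * (dopplerShift N a * dopplerShift N mt * (cyclicShift N l * cyclicShift N lt)) *
            (dftMatrix N)ᴴ * (chirpMatrix N c₂)ᴴ) := by
        rw [cyclicShift_mul_dopplerShift, conjTranspose_dftMatrix_mul_dopplerShift, neg_neg]
        simp only [Matrix.mul_smul, Matrix.smul_mul, Matrix.mul_assoc]
    _ = _ := by
        rw [dopplerShift_mul_dopplerShift, cyclicShift_mul_cyclicShift]

/-- the MD-CDDS precoding matrix `C = Π_N^{m̃ mod N} P^{[k̃,l̃]}` of AFDM converts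
the subchannel of a path with Doppler `k` and delay `l` into a unit-modulus scalar multiple of
the subchannel of the effective path with Doppler `k + k̃` and delay `l + l̃`:
`H(k,l) Π_N^{m̃} P^{[k̃,l̃]} = e^{−(2πi/N)(N c₁ (2 l l̃ + l̃²) + m̃ l)} H(k + k̃, l + l̃)`,
where `m̃ = k̃ − c l̃` and `c = 2 N c₁` is an integer. -/
theorem mdcdds_afdm_subChannel (N : ℕ) (hN : 0 < N) (hEven : Even N)
    (c₁ c₂ : ℝ) (c : ℤ) (hc : 2 * (N : ℝ) * c₁ = (c : ℝ)) (k l kt lt : ℤ) :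
    subChannel N c₁ c₂ k l * cyclicShift N (kt - c * lt) * phaseComp N c₂ lt (kt - c * lt) =
      Complex.exp (-((2 * Real.pi * Complex.I / (N : ℂ)) *
          ((N : ℂ) * (c₁ : ℂ) * (2 * (l : ℂ) * (lt : ℂ) + (lt : ℂ) ^ 2) +
            ((kt - c * lt : ℤ) : ℂ) * (l : ℂ)))) •
        subChannel N c₁ c₂ (k + kt) (l + lt) := by
  have : NeZero N := NeZero.of_pos hN
  have hNC : (N : ℂ) ≠ 0 := by exact_mod_cast hN.ne'
  rw [subChannel_eq_smul hEven hc, subChannel_eq_smul hEven hc, smul_mul, smul_mul,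
    dopplerShift_mul_cyclicShift_mul_precoder_eq_smul, smul_smul, smul_smul,
    show k - c * l + (kt - c * lt) = k + kt - c * (l + lt) by ring]
  congr 1
  rw [← Complex.exp_add, ← Complex.exp_add]
  congr 1
  push_cast
  field_simp
  ring
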